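/- Let A, B ⊂ ℝ be finite sets with |A| = |B| = n^{1/2} ≥ 2 (n a perfect square), where A is of SzT-type with parameter α = 2 and coefficient d_A > 0 and B is of SzT-type with parameter α = 2 and coefficient d_B > 0, and let k ≥ 1 be real. Then there is an absolute constant C > 0 such that the number of rich-rich unit-area triangles spanned by S = A × B (with respect to the richness parameter k) is at most C · (d_A² · d_B · n^{7/2} · (log n) / k⁵ + n²). -/

import Mathlib

/-!
Order the vertices `(a, x), (b, y), (c, z)` of a rich-rich unit triangle so that `a ≠ b`. The
triangle is then determined by the `k`-rich point `(a, b, c) ∈ A³`, the pair `(y, x)` and the sign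
of the determinant, which fixes `z`. Since `(x, y, z)` is `k`-rich, `y - x` has at least `k`
representations in `B - B`. Summing the Szemerédi–Trotter-type tail bound dyadically gives at most
`8 dB |B|³ / k²` such pairs; applying it to `A` and to the sets `{u ∈ A | u + s ∈ A}` gives at most
`64 dA² |A|⁴ / k³` rich points of `A³`. Hence there are at most `1024 dA² dB n^{7/2} / k⁵` rich-rich
triangles, even without the logarithm.
-/

open scoped Pointwise Classical

/-- `delta X Y s` is the number of representations of `s` as `x - y`, `x ∈ X`, `y ∈ Y`. -/
noncomputable def delta (X Y : Finset ℝ) (s : ℝ) : ℕ :=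
  ((X ×ˢ Y).filter fun p => p.1 - p.2 = s).card

/-- `X` is of Szemerédi–Trotter type with parameter `α = 2` and coefficient `d`. -/
def SzTType2 (X : Finset ℝ) (d : ℝ) : Prop :=
  ∀ (Y : Finset ℝ) (τ : ℝ), 1 ≤ τ →
    (((X - Y).filter fun s => τ ≤ (delta X Y s : ℝ)).card : ℝ)
      ≤ d * X.card * (Y.card : ℝ) ^ 2 / τ ^ 3

/-- `(a,b,c) ∈ A³` is `k`-rich if the line `(a,b,c) + ℝ(1,1,1)` contains at
least `k` points of `A³`. -/
def IsRich (A : Finset ℝ) (k : ℝ) (a b c : ℝ) : Prop :=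
  k ≤ (((A ×ˢ A ×ˢ A).filter fun q =>
    ∃ t : ℝ, q.1 = a + t ∧ q.2.1 = b + t ∧ q.2.2 = c + t).card : ℝ)

/-- The unordered triples of points of `A × B` spanning a triangle of area `1`
that are rich-rich with respect to the richness parameter `k`. -/
noncomputable def richRichTriangles (A B : Finset ℝ) (k : ℝ) : Finset (Finset (ℝ × ℝ)) :=
  ((A ×ˢ B).powersetCard 3).filter fun T => ∃ p q r : ℝ × ℝ, T = {p, q, r} ∧
    |(q.1 - p.1) * (r.2 - p.2) - (q.2 - p.2) * (r.1 - p.1)| = 2 ∧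
    IsRich A k p.1 q.1 r.1 ∧ IsRich B k p.2 q.2 r.2

open Finset

lemma delta_eq_card_filter (X Y : Finset ℝ) (s : ℝ) :
    delta X Y s = #{y ∈ Y | y + s ∈ X} := by
  refine card_nbij' Prod.snd (fun y => (y + s, y)) ?_ ?_ ?_ ?_
  · rintro ⟨x, y⟩ h
    simp only [mem_coe, mem_filter, mem_product] at h ⊢
    obtain ⟨⟨hx, hy⟩, rfl⟩ := h
    exact ⟨hy, by simpa using hx⟩
  · intro y h
    simp only [mem_coe, mem_filter, mem_product] at h ⊢
    exact ⟨⟨h.2, h.1⟩, by ring⟩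
  · rintro ⟨x, y⟩ h
    simp only [mem_coe, mem_filter, mem_product] at h
    simp [← h.2]
  · intro y _
    rfl

lemma mem_sub_of_delta_pos {X Y : Finset ℝ} {s : ℝ} (h : 0 < delta X Y s) : s ∈ X - Y := by
  obtain ⟨⟨x, y⟩, hxy⟩ := card_pos.1 h
  simp only [mem_filter, mem_product] at hxy
  exact mem_sub.2 ⟨x, hxy.1.1, y, hxy.1.2, hxy.2⟩

noncomputable def lineCount (A : Finset ℝ) (s₁ s₂ : ℝ) : ℕ :=
  #{q ∈ A ×ˢ A ×ˢ A | q.2.1 - q.1 = s₁ ∧ q.2.2 - q.1 = s₂}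

lemma isRich_iff_le_lineCount {A : Finset ℝ} {k a b c : ℝ} :
    IsRich A k a b c ↔ k ≤ lineCount A (b - a) (c - a) := by
  unfold IsRich lineCount
  congr! 3
  refine filter_congr fun q _ => ?_
  constructor
  · rintro ⟨t, h₁, h₂, h₃⟩
    constructor <;> linarith
  · rintro ⟨h₁, h₂⟩
    exact ⟨q.1 - a, by ring, by linarith, by linarith⟩

lemma lineCount_comm (A : Finset ℝ) (s₁ s₂ : ℝ) : lineCount A s₁ s₂ = lineCount A s₂ s₁ := by
  let swap : ℝ × ℝ × ℝ → ℝ × ℝ × ℝ := fun q => (q.1, q.2.2, q.2.1)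
  refine card_nbij' swap swap ?_ ?_ (fun _ _ => rfl) (fun _ _ => rfl) <;>
  · intro q h
    simp only [swap, mem_coe, mem_filter, mem_product] at h ⊢
    tauto

lemma IsRich.swap {A : Finset ℝ} {k a b c : ℝ} (h : IsRich A k a b c) : IsRich A k a c b := by
  rw [isRich_iff_le_lineCount] at h ⊢
  rwa [lineCount_comm]

lemma lineCount_le_delta (A : Finset ℝ) (s₁ s₂ : ℝ) : lineCount A s₁ s₂ ≤ delta A A s₁ := by
  refine card_le_card_of_injOn (fun q => (q.2.1, q.1)) ?_ ?_
  · intro q h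
    simp only [mem_coe, mem_filter, mem_product] at h ⊢
    exact ⟨⟨h.1.2.1, h.1.1⟩, h.2.1⟩
  · rintro q h q' h' hqq'
    simp only [mem_coe, mem_filter, mem_product, Prod.mk.injEq] at h h' hqq'
    ext <;> linarith

lemma lineCount_le_delta_filter (A : Finset ℝ) (s₁ s₂ : ℝ) :
    lineCount A s₁ s₂ ≤ delta A {u ∈ A | u + s₁ ∈ A} s₂ := by
  refine card_le_card_of_injOn (fun q => (q.2.2, q.1)) ?_ ?_
  · intro q h
    simp only [mem_coe, mem_filter, mem_product] at h ⊢
    obtain ⟨⟨ha, hb, hc⟩, h₁, h₂⟩ := h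
    refine ⟨⟨hc, ha, ?_⟩, h₂⟩
    rwa [← h₁, add_sub_cancel]
  · rintro q h q' h' hqq'
    simp only [mem_coe, mem_filter, mem_product, Prod.mk.injEq] at h h' hqq'
    ext <;> linarith

/-- Dyadic summation: the layer `k ≤ f < 2k` contributes at most `(2k)^p · c / k³`, and these
contributions decay geometrically in `k` because `p < 3`. -/
theorem sum_pow_le_of_card_le_div_cube {ι : Type*} (D : Finset ι) (f : ι → ℕ) {c : ℝ}
    (H : ∀ τ : ℝ, 1 ≤ τ → (#{s ∈ D | τ ≤ f s} : ℝ) ≤ c / τ ^ 3) {p : ℕ} (hp : p ≤ 2)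
    {k : ℝ} (hk : 1 ≤ k) :
    ∑ s ∈ D with k ≤ f s, (f s : ℝ) ^ p ≤ 8 * c * k ^ p / k ^ 3 := by
  have hc : 0 ≤ c := by simpa using (Nat.cast_nonneg _).trans (H 1 le_rfl)
  suffices key : ∀ j : ℕ, ∀ k : ℝ, 1 ≤ k → (∀ s ∈ D, (f s : ℝ) < 2 ^ j * k) →
      ∑ s ∈ D with k ≤ f s, (f s : ℝ) ^ p ≤ 8 * c * k ^ p / k ^ 3 by
    refine key (D.sup f) k hk fun s hs => ?_
    calc (f s : ℝ) < 2 ^ D.sup f := by exact_mod_cast (le_sup hs).trans_lt Nat.lt_two_pow_self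
      _ ≤ 2 ^ D.sup f * k := le_mul_of_one_le_right (by positivity) hk
  intro j
  induction j with
  | zero =>
    intro k _ hlt
    rw [filter_false_of_mem fun s hs => by simpa using hlt s hs, sum_empty]
    positivity
  | succ j ih =>
    intro k hk hlt
    rw [← sum_filter_add_sum_filter_not _ fun s => 2 * k ≤ (f s : ℝ), filter_filter]
    have high : ∑ s ∈ D with k ≤ f s ∧ 2 * k ≤ f s, (f s : ℝ) ^ p
        ≤ 8 * c * (2 * k) ^ p / (2 * k) ^ 3 := by
      have hfilter : {s ∈ D | k ≤ (f s : ℝ) ∧ 2 * k ≤ f s} = {s ∈ D | 2 * k ≤ (f s : ℝ)} :=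
        filter_congr fun s _ => ⟨And.right, fun h => ⟨by linarith, h⟩⟩
      rw [hfilter]
      refine ih (2 * k) (by linarith) fun s hs => ?_
      have := hlt s hs
      rw [pow_succ] at this
      linarith
    have low : ∑ s ∈ {s ∈ D | k ≤ f s} with ¬ 2 * k ≤ f s, (f s : ℝ) ^ p
        ≤ (2 * k) ^ p * (c / k ^ 3) := by
      refine (sum_le_card_nsmul _ _ ((2 * k) ^ p) fun s hs => ?_).trans ?_
      · exact pow_le_pow_left₀ (Nat.cast_nonneg _) (not_le.1 (mem_filter.1 hs).2).le p
      · rw [nsmul_eq_mul, mul_comm]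
        gcongr
        exact (Nat.cast_le.2 (card_le_card (filter_subset _ _))).trans (H k hk)
    calc _ ≤ (2 * k) ^ p * (c / k ^ 3) + 8 * c * (2 * k) ^ p / (2 * k) ^ 3 := by linarith
      _ = 2 ^ (p + 1) * (c * k ^ p / k ^ 3) := by rw [mul_pow, mul_pow]; field_simp; ring
      _ ≤ 2 ^ 3 * (c * k ^ p / k ^ 3) := by gcongr <;> [norm_num; omega]
      _ = 8 * c * k ^ p / k ^ 3 := by ring

namespace SzTType2

variable {A : Finset ℝ} {d k : ℝ}

lemma sum_delta_pow_le (hA : SzTType2 A d) {p : ℕ} (hp : p ≤ 2) (hk : 1 ≤ k) :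
    ∑ s ∈ A - A with k ≤ delta A A s, (delta A A s : ℝ) ^ p
      ≤ 8 * (d * #A ^ 3) * k ^ p / k ^ 3 :=
  sum_pow_le_of_card_le_div_cube _ _ (fun τ hτ => (hA A τ hτ).trans_eq (by ring)) hp hk

lemma card_filter_le_lineCount_le (hA : SzTType2 A d) (s₁ : ℝ) {τ : ℝ} (hτ : 1 ≤ τ) :
    (#{s₂ ∈ A - A | τ ≤ lineCount A s₁ s₂} : ℝ) ≤ d * #A * (delta A A s₁ : ℝ) ^ 2 / τ ^ 3 := by
  set Y := {u ∈ A | u + s₁ ∈ A}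
  have hsub : {s₂ ∈ A - A | τ ≤ lineCount A s₁ s₂} ⊆ {s ∈ A - Y | τ ≤ delta A Y s} := by
    intro s₂ hs₂
    rw [mem_filter] at hs₂ ⊢
    have hδ : τ ≤ delta A Y s₂ :=
      hs₂.2.trans (by exact_mod_cast lineCount_le_delta_filter A s₁ s₂)
    exact ⟨mem_sub_of_delta_pos (by exact_mod_cast zero_lt_one.trans_le (hτ.trans hδ)), hδ⟩
  calc (#{s₂ ∈ A - A | τ ≤ lineCount A s₁ s₂} : ℝ)
      ≤ #{s ∈ A - Y | τ ≤ delta A Y s} := by exact_mod_cast card_le_card hsub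
    _ ≤ d * #A * #Y ^ 2 / τ ^ 3 := hA Y τ hτ
    _ = d * #A * (delta A A s₁ : ℝ) ^ 2 / τ ^ 3 := by rw [delta_eq_card_filter]

lemma sum_lineCount_le (hA : SzTType2 A d) (hd : 0 ≤ d) (hk : 1 ≤ k) :
    ∑ s ∈ (A - A) ×ˢ (A - A) with k ≤ lineCount A s.1 s.2, (lineCount A s.1 s.2 : ℝ)
      ≤ 64 * d ^ 2 * #A ^ 4 / k ^ 3 := by
  have inner (s₁ : ℝ) : ∑ s₂ ∈ A - A with k ≤ lineCount A s₁ s₂, (lineCount A s₁ s₂ : ℝ)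
      ≤ 8 * (d * #A * delta A A s₁ ^ 2) * k / k ^ 3 := by
    simpa using sum_pow_le_of_card_le_div_cube (A - A) (lineCount A s₁)
      (fun τ hτ => hA.card_filter_le_lineCount_le s₁ hτ) (p := 1) (by norm_num) hk
  calc ∑ s ∈ (A - A) ×ˢ (A - A) with k ≤ lineCount A s.1 s.2, (lineCount A s.1 s.2 : ℝ)
      = ∑ s₁ ∈ A - A with k ≤ delta A A s₁,
          ∑ s₂ ∈ A - A with k ≤ lineCount A s₁ s₂, (lineCount A s₁ s₂ : ℝ) := by
        simp only [sum_filter, sum_product]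
        refine sum_congr rfl fun s₁ _ => ?_
        split_ifs with hδ
        · rfl
        · refine sum_eq_zero fun s₂ _ => if_neg fun hL => hδ (hL.trans ?_)
          exact_mod_cast lineCount_le_delta A s₁ s₂
    _ ≤ ∑ s₁ ∈ A - A with k ≤ delta A A s₁, 8 * (d * #A * delta A A s₁ ^ 2) * k / k ^ 3 :=
        sum_le_sum fun s₁ _ => inner s₁
    _ = 8 * d * #A * k / k ^ 3 * ∑ s₁ ∈ A - A with k ≤ delta A A s₁, (delta A A s₁ : ℝ) ^ 2 := by
        rw [mul_sum]
        exact sum_congr rfl fun _ _ => by ring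
    _ ≤ 8 * d * #A * k / k ^ 3 * (8 * (d * #A ^ 3) * k ^ 2 / k ^ 3) := by
        have : 0 ≤ k := by linarith
        gcongr
        exact hA.sum_delta_pow_le (by norm_num) hk
    _ = 64 * d ^ 2 * #A ^ 4 / k ^ 3 := by
        have : k ≠ 0 := by linarith
        field_simp
        ring

end SzTType2

noncomputable def richPoints (A : Finset ℝ) (k : ℝ) : Finset (ℝ × ℝ × ℝ) :=
  {a ∈ A ×ˢ A ×ˢ A | IsRich A k a.1 a.2.1 a.2.2}

noncomputable def popularDiffPairs (B : Finset ℝ) (k : ℝ) : Finset (ℝ × ℝ) :=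
  {p ∈ B ×ˢ B | k ≤ delta B B (p.1 - p.2)}

lemma card_richPoints_le_sum (A : Finset ℝ) (k : ℝ) :
    #(richPoints A k)
      ≤ ∑ s ∈ (A - A) ×ˢ (A - A) with k ≤ lineCount A s.1 s.2, lineCount A s.1 s.2 := by
  rw [card_eq_sum_card_fiberwise (f := fun a => (a.2.1 - a.1, a.2.2 - a.1))]
  · refine sum_le_sum fun s _ => card_le_card fun a ha => ?_
    simp only [richPoints, mem_filter] at ha ⊢
    obtain ⟨⟨haA, -⟩, rfl⟩ := ha
    exact ⟨haA, rfl, rfl⟩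
  · intro a ha
    simp only [richPoints, mem_coe, mem_filter, mem_product] at ha ⊢
    obtain ⟨⟨h₁, h₂, h₃⟩, hrich⟩ := ha
    exact ⟨⟨sub_mem_sub h₂ h₁, sub_mem_sub h₃ h₁⟩, isRich_iff_le_lineCount.1 hrich⟩

lemma card_popularDiffPairs_le_sum (B : Finset ℝ) (k : ℝ) :
    #(popularDiffPairs B k) ≤ ∑ t ∈ B - B with k ≤ delta B B t, delta B B t := by
  rw [card_eq_sum_card_fiberwise (f := fun p => p.1 - p.2)]
  · refine sum_le_sum fun t _ => card_le_card fun p hp => ?_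
    simp only [popularDiffPairs, mem_filter] at hp ⊢
    exact ⟨hp.1.1, hp.2⟩
  · intro p hp
    simp only [popularDiffPairs, mem_coe, mem_filter, mem_product] at hp ⊢
    exact ⟨sub_mem_sub hp.1.1 hp.1.2, hp.2⟩

namespace SzTType2

variable {A : Finset ℝ} {d k : ℝ}

lemma card_richPoints_le (hA : SzTType2 A d) (hd : 0 ≤ d) (hk : 1 ≤ k) :
    (#(richPoints A k) : ℝ) ≤ 64 * d ^ 2 * #A ^ 4 / k ^ 3 :=
  calc (#(richPoints A k) : ℝ)
      ≤ ∑ s ∈ (A - A) ×ˢ (A - A) with k ≤ lineCount A s.1 s.2, (lineCount A s.1 s.2 : ℝ) := by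
        exact_mod_cast card_richPoints_le_sum A k
    _ ≤ 64 * d ^ 2 * #A ^ 4 / k ^ 3 := hA.sum_lineCount_le hd hk

lemma card_popularDiffPairs_le (hA : SzTType2 A d) (hk : 1 ≤ k) :
    (#(popularDiffPairs A k) : ℝ) ≤ 8 * d * #A ^ 3 / k ^ 2 :=
  calc (#(popularDiffPairs A k) : ℝ)
      ≤ ∑ t ∈ A - A with k ≤ delta A A t, (delta A A t : ℝ) ^ 1 := by
        exact_mod_cast (card_popularDiffPairs_le_sum A k).trans_eq (by simp)
    _ ≤ 8 * (d * #A ^ 3) * k ^ 1 / k ^ 3 := hA.sum_delta_pow_le (by norm_num) hk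
    _ = 8 * d * #A ^ 3 / k ^ 2 := by
        have : k ≠ 0 := by linarith
        field_simp

end SzTType2

/-- The ordinate of the third vertex is the one making
`(b - a) * (z - x) - (y - x) * (c - a) = σ`. -/
noncomputable def triangleWithDet (a b c x y σ : ℝ) : Finset (ℝ × ℝ) :=
  {(a, x), (b, y), (c, x + (σ + (y - x) * (c - a)) / (b - a))}

lemma triangleWithDet_eq {p q r : ℝ × ℝ} (hpq : p.1 ≠ q.1) :
    triangleWithDet p.1 q.1 r.1 p.2 q.2
      ((q.1 - p.1) * (r.2 - p.2) - (q.2 - p.2) * (r.1 - p.1)) = {p, q, r} := by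
  have hr : p.2 + ((q.1 - p.1) * (r.2 - p.2) - (q.2 - p.2) * (r.1 - p.1)
      + (q.2 - p.2) * (r.1 - p.1)) / (q.1 - p.1) = r.2 := by
    field_simp [sub_ne_zero.2 hpq.symm]
    ring
  simp only [triangleWithDet, hr]

lemma mem_image_triangleWithDet {A B : Finset ℝ} {k : ℝ} {p q r : ℝ × ℝ}
    (hp : p ∈ A ×ˢ B) (hq : q ∈ A ×ˢ B) (hr : r ∈ A ×ˢ B) (hpq : p.1 ≠ q.1)
    (hdet : |(q.1 - p.1) * (r.2 - p.2) - (q.2 - p.2) * (r.1 - p.1)| = 2)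
    (hA : IsRich A k p.1 q.1 r.1) (hB : IsRich B k p.2 q.2 r.2) :
    {p, q, r} ∈ (richPoints A k ×ˢ popularDiffPairs B k ×ˢ ({2, -2} : Finset ℝ)).image
      fun w => triangleWithDet w.1.1 w.1.2.1 w.1.2.2 w.2.1.2 w.2.1.1 w.2.2 := by
  rw [mem_product] at hp hq hr
  refine mem_image.2 ⟨((p.1, q.1, r.1), (q.2, p.2), _), ?_, triangleWithDet_eq hpq⟩
  simp only [richPoints, popularDiffPairs, mem_product, mem_filter, mem_insert, mem_singleton]
  refine ⟨⟨⟨hp.1, hq.1, hr.1⟩, hA⟩, ⟨⟨hq.2, hp.2⟩, ?_⟩, eq_or_eq_neg_of_abs_eq hdet⟩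
  exact (isRich_iff_le_lineCount.1 hB).trans (by exact_mod_cast lineCount_le_delta _ _ _)

/-- If all three abscissae agreed the area would vanish, so some ordering has `p.1 ≠ q.1`. -/
lemma richRichTriangles_subset_image (A B : Finset ℝ) (k : ℝ) :
    richRichTriangles A B k
      ⊆ (richPoints A k ×ˢ popularDiffPairs B k ×ˢ ({2, -2} : Finset ℝ)).image
          fun w => triangleWithDet w.1.1 w.1.2.1 w.1.2.2 w.2.1.2 w.2.1.1 w.2.2 := by
  intro T hT
  simp only [richRichTriangles, mem_filter, mem_powersetCard] at hT
  obtain ⟨⟨hTsub, -⟩, p, q, r, rfl, hdet, hA, hB⟩ := hT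
  have hp : p ∈ A ×ˢ B := hTsub (by simp)
  have hq : q ∈ A ×ˢ B := hTsub (by simp)
  have hr : r ∈ A ×ˢ B := hTsub (by simp)
  by_cases hpq : p.1 = q.1
  · have hpr : p.1 ≠ r.1 := fun hpr => by simp [← hpq, ← hpr] at hdet
    rw [pair_comm q r]
    refine mem_image_triangleWithDet hp hr hq hpr ?_ hA.swap hB.swap
    rw [← hdet, ← abs_neg]
    ring_nf
  · exact mem_image_triangleWithDet hp hq hr hpq hdet hA hB

lemma card_richRichTriangles_le_mul (A B : Finset ℝ) (k : ℝ) :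
    #(richRichTriangles A B k) ≤ #(richPoints A k) * #(popularDiffPairs B k) * 2 :=
  calc #(richRichTriangles A B k)
      ≤ #(richPoints A k ×ˢ popularDiffPairs B k ×ˢ ({2, -2} : Finset ℝ)) :=
        (card_le_card (richRichTriangles_subset_image A B k)).trans card_image_le
    _ = #(richPoints A k) * #(popularDiffPairs B k) * 2 := by
        rw [card_product, card_product, card_pair (by norm_num), mul_assoc]

theorem SzTType2.card_richRichTriangles_le {A B : Finset ℝ} {dA dB k : ℝ} (hA : SzTType2 A dA)
    (hB : SzTType2 B dB) (hdA : 0 ≤ dA) (hk : 1 ≤ k) :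
    (#(richRichTriangles A B k) : ℝ) ≤ 1024 * dA ^ 2 * dB * #A ^ 4 * #B ^ 3 / k ^ 5 :=
  calc (#(richRichTriangles A B k) : ℝ) ≤ #(richPoints A k) * #(popularDiffPairs B k) * 2 := by
        exact_mod_cast card_richRichTriangles_le_mul A B k
    _ ≤ 64 * dA ^ 2 * #A ^ 4 / k ^ 3 * (8 * dB * #B ^ 3 / k ^ 2) * 2 := by
        have hrich := hA.card_richPoints_le hdA hk
        have hpopular := hB.card_popularDiffPairs_le hk
        gcongr
    _ = 1024 * dA ^ 2 * dB * #A ^ 4 * #B ^ 3 / k ^ 5 := by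
        have : k ≠ 0 := by linarith
        field_simp
        ring

theorem rich_rich_triangles_bound :
    ∃ C : ℝ, 0 < C ∧ ∀ (n m : ℕ) (A B : Finset ℝ) (dA dB k : ℝ),
      n = m ^ 2 → A.card = m → B.card = m → 2 ≤ m →
      0 < dA → 0 < dB → SzTType2 A dA → SzTType2 B dB → 1 ≤ k →
      ((richRichTriangles A B k).card : ℝ)
        ≤ C * (dA ^ 2 * dB * (n : ℝ) ^ ((7 : ℝ) / 2) * Real.log n / k ^ 5
              + (n : ℝ) ^ 2) := by
  refine ⟨1024, by norm_num, ?_⟩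
  rintro n m A B dA dB k rfl rfl hBA hm hdA hdB hA hB hk
  have hm2 : (2 : ℝ) ≤ #A := by exact_mod_cast hm
  have hpow : ((#A ^ 2 : ℕ) : ℝ) ^ ((7 : ℝ) / 2) = (#A : ℝ) ^ 7 := by
    rw [Nat.cast_pow, ← Real.rpow_natCast _ 2, ← Real.rpow_mul (by positivity)]
    norm_num
  have hlog : 1 ≤ Real.log (#A ^ 2 : ℕ) := by
    rw [Real.le_log_iff_exp_le (by positivity)]
    push_cast
    nlinarith [Real.exp_one_lt_d9]
  calc ((richRichTriangles A B k).card : ℝ)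
      ≤ 1024 * dA ^ 2 * dB * #A ^ 4 * #B ^ 3 / k ^ 5 := hA.card_richRichTriangles_le hB hdA.le hk
    _ = 1024 * (dA ^ 2 * dB * (#A : ℝ) ^ 7 / k ^ 5 * 1) := by rw [hBA]; ring
    _ ≤ 1024 * (dA ^ 2 * dB * (#A : ℝ) ^ 7 / k ^ 5 * Real.log (#A ^ 2 : ℕ)) := by gcongr
    _ ≤ _ := by
        rw [hpow, mul_div_right_comm _ (Real.log _)]
        gcongr
        exact le_add_of_nonneg_right (by positivity)
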